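/- (Smooth Sylvester normalisation.) Let U ⊆ ℝ^d be an open neighbourhood of 0 and let B : U → Sym(m) be a smooth map into the symmetric m×m real matrices such that B(x) is invertible for every x ∈ U. Then there exist an open neighbourhood U' ⊆ U of 0 and a smooth map A : U' → GL(m, ℝ) such that A(x)^{−T} B(x) A(x)^{−1} = B(0) for all x ∈ U'; equivalently, B(x) = A(x)ᵀ B(0) A(x) for all x ∈ U'. -/

import Mathlib

/-!
Write `B x = B 0 * M x` with `M x = (B 0)⁻¹ * B x`, so `M 0 = 1`. Squaring has derivative
`H ↦ 2 H` at `1`, so by the inverse function theorem it is a local diffeomorphism near `1`,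
and `A x := √(M x)` is smooth near `0`. The `B 0`-adjoint `N ↦ (B 0)⁻¹ * Nᵀ * B 0` is an
anti-automorphism fixing `M x` (as `B x` and `B 0` are symmetric), so it sends `A x` to another
square root of `M x` near `1`; by local injectivity of squaring, `A x` is `B 0`-self-adjoint,
i.e. `(A x)ᵀ * B 0 = B 0 * A x`, and then `(A x)ᵀ * B 0 * A x = B 0 * (A x)² = B x`.
-/

open Matrix

section LocalInverse

variable {𝕂 E F : Type*} [RCLike 𝕂] [NormedAddCommGroup E] [NormedSpace 𝕂 E] [CompleteSpace E]
  [NormedAddCommGroup F] [NormedSpace 𝕂 F] {n : WithTop ℕ∞}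

theorem ContDiff.exists_openPartialHomeomorph_contDiffOn_symm {f : E → F} (hf : ContDiff 𝕂 n f)
    (hn : n ≠ 0) {f' : E ≃L[𝕂] F} {a : E} (hf' : HasFDerivAt f (f' : E →L[𝕂] F) a) :
    ∃ e : OpenPartialHomeomorph E F, ⇑e = f ∧ a ∈ e.source ∧ ContDiffOn 𝕂 n e.symm e.target := by
  set V := fderiv 𝕂 f ⁻¹' Set.range ((↑) : (E ≃L[𝕂] F) → E →L[𝕂] F)
  have hV : IsOpen V := ContinuousLinearEquiv.isOpen.preimage (hf.continuous_fderiv hn)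
  refine ⟨(hf.contDiffAt.toOpenPartialHomeomorph f hf' hn).restrOpen V hV, rfl,
    ⟨hf.contDiffAt.mem_toOpenPartialHomeomorph_source hf' hn, f', hf'.fderiv.symm⟩, ?_⟩
  intro z hz
  obtain ⟨g, hg⟩ := (OpenPartialHomeomorph.map_target _ hz).2
  refine (OpenPartialHomeomorph.contDiffAt_symm _ hz (f₀' := g) ?_ hf.contDiffAt).contDiffWithinAt
  rw [hg]
  exact (hf.differentiable hn _).hasFDerivAt

end LocalInverse

variable (𝕂 R : Type*) [RCLike 𝕂] [NormedRing R] [NormedAlgebra 𝕂 R] [CompleteSpace R] in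
theorem exists_openPartialHomeomorph_mul_self :
    ∃ e : OpenPartialHomeomorph R R, ⇑e = (fun y => y * y) ∧ (1 : R) ∈ e.source ∧
      ContDiffOn 𝕂 ⊤ e.symm e.target := by
  have hsq : HasFDerivAt (fun y : R => y * y)
      ((ContinuousLinearEquiv.smulLeft (Units.mk0 (2 : 𝕂) two_ne_zero) : R ≃L[𝕂] R) : R →L[𝕂] R)
      1 := by
    refine ((hasFDerivAt_id (𝕜 := 𝕂) (1 : R)).mul' (hasFDerivAt_id (1 : R))).congr_fderiv ?_
    ext y
    simp [two_smul]
  exact (contDiff_id.mul contDiff_id).exists_openPartialHomeomorph_contDiffOn_symm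
    (by simp) hsq

namespace Matrix

section FormAdjoint

variable {n α : Type*} [Fintype n] [DecidableEq n] [CommRing α]

/-- The adjoint of `N` for the bilinear form `(u, v) ↦ uᵀ * C * v`. -/
noncomputable def formAdjoint (C N : Matrix n n α) : Matrix n n α := C⁻¹ * Nᵀ * C

variable {C : Matrix n n α}

theorem formAdjoint_one (hC : IsUnit C.det) : formAdjoint C 1 = 1 := by
  simp [formAdjoint, nonsing_inv_mul _ hC]

theorem formAdjoint_mul (hC : IsUnit C.det) (N N' : Matrix n n α) :
    formAdjoint C (N * N') = formAdjoint C N' * formAdjoint C N := by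
  simp only [formAdjoint, transpose_mul, Matrix.mul_assoc, mul_nonsing_inv_cancel_left _ _ hC]

theorem formAdjoint_inv_mul (hC : IsUnit C.det) (hCs : C.IsSymm) {D : Matrix n n α}
    (hDs : D.IsSymm) : formAdjoint C (C⁻¹ * D) = C⁻¹ * D := by
  rw [formAdjoint, transpose_mul, hDs.eq, transpose_nonsing_inv, hCs.eq, Matrix.mul_assoc,
    Matrix.mul_assoc, nonsing_inv_mul _ hC, Matrix.mul_one]

theorem transpose_mul_mul_eq_of_formAdjoint_eq (hC : IsUnit C.det) {A D : Matrix n n α}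
    (hA : formAdjoint C A = A) (hAA : A * A = C⁻¹ * D) : Aᵀ * C * A = D := by
  have hAC : Aᵀ * C = C * A := calc
    Aᵀ * C = C * formAdjoint C A := by
      rw [formAdjoint, Matrix.mul_assoc C⁻¹, mul_nonsing_inv_cancel_left _ _ hC]
    _ = C * A := by rw [hA]
  rw [hAC, Matrix.mul_assoc, hAA, mul_nonsing_inv_cancel_left _ _ hC]

theorem continuous_formAdjoint [TopologicalSpace α] [IsTopologicalRing α] :
    Continuous (formAdjoint C) :=
  (continuous_const.matrix_mul continuous_id.matrix_transpose).matrix_mul continuous_const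

end FormAdjoint

open scoped Norms.Operator

variable {𝕂 E ι : Type*} [RCLike 𝕂] [NormedAddCommGroup E] [NormedSpace 𝕂 E]
  {k : WithTop ℕ∞} {U : Set E}

theorem contDiffOn_iff_entries {κ : Type*} [Fintype ι] [Fintype κ] {f : E → Matrix ι κ 𝕂} :
    ContDiffOn 𝕂 k f U ↔ ∀ i j, ContDiffOn 𝕂 k (fun x => f x i j) U := by
  rw [← ((ofLinearEquiv 𝕂).symm.toContinuousLinearEquiv).comp_contDiffOn_iff]
  simp only [contDiffOn_pi]
  rfl

theorem exists_contDiffOn_transpose_mul_mul_eq [Fintype ι] [DecidableEq ι]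
    {B : E → Matrix ι ι 𝕂} {a : E} (hB : ContDiffOn 𝕂 k B U) (hU : IsOpen U) (ha : a ∈ U)
    (hsymm : ∀ x ∈ U, (B x).IsSymm) (hdet : IsUnit (B a).det) :
    ∃ U' ⊆ U, IsOpen U' ∧ a ∈ U' ∧
      ∃ A : E → Matrix ι ι 𝕂, ContDiffOn 𝕂 k A U' ∧ ∀ x ∈ U', B x = (A x)ᵀ * B a * A x := by
  obtain ⟨e, he, h1, hsmooth⟩ := exists_openPartialHomeomorph_mul_self 𝕂 (Matrix ι ι 𝕂)
  set C := B a
  set M := fun x => C⁻¹ * B x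
  have hM : ContDiffOn 𝕂 k M U := contDiffOn_const.mul hB
  have hMa : M a = 1 := nonsing_inv_mul _ hdet
  have he1 : e 1 = 1 := by simp only [he, one_mul]
  have hT : IsOpen (e.target ∩ (formAdjoint C ∘ e.symm) ⁻¹' e.source) :=
    (continuous_formAdjoint.comp_continuousOn e.continuousOn_symm).isOpen_inter_preimage
      e.open_target e.open_source
  refine ⟨U ∩ M ⁻¹' (e.target ∩ (formAdjoint C ∘ e.symm) ⁻¹' e.source), Set.inter_subset_left,
    hM.continuousOn.isOpen_inter_preimage hU hT, ⟨ha, ?_⟩, e.symm ∘ M,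
    (hsmooth.of_le le_top).comp (hM.mono Set.inter_subset_left) fun x hx => hx.2.1, ?_⟩
  · have hsymm1 : e.symm 1 = 1 := (congrArg e.symm he1).symm.trans (e.left_inv h1)
    rw [Set.mem_preimage, hMa]
    refine ⟨he1 ▸ e.map_source h1, ?_⟩
    rwa [Set.mem_preimage, Function.comp_apply, hsymm1, formAdjoint_one hdet]
  rintro x ⟨hxU, hxT, hxS⟩
  have hsq : e.symm (M x) * e.symm (M x) = M x := by simpa [he] using e.right_inv hxT
  -- both sides are square roots of `M x` in `e.source`, where squaring is injective
  have hadj : formAdjoint C (e.symm (M x)) = e.symm (M x) := by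
    refine e.injOn hxS (e.map_target hxT) ?_
    simp only [he, Function.comp_apply]
    rw [← formAdjoint_mul hdet, hsq, formAdjoint_inv_mul hdet (hsymm a ha) (hsymm x hxU)]
  exact (transpose_mul_mul_eq_of_formAdjoint_eq hdet hadj hsq).symm

end Matrix

/-- smooth Sylvester normalisation: if `B : U → Sym(m)` is a smooth
family of invertible symmetric matrices on a neighbourhood `U` of `0 ∈ ℝ^d`, then on a
possibly smaller neighbourhood `U'` of `0` there is a smooth family of invertible
matrices `A(x)` with `B(x) = A(x)ᵀ B(0) A(x)` for all `x ∈ U'`. -/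
theorem smooth_sylvester (d m : ℕ)
    (U : Set (Fin d → ℝ)) (hU : IsOpen U) (h0U : (0 : Fin d → ℝ) ∈ U)
    (B : (Fin d → ℝ) → Matrix (Fin m) (Fin m) ℝ)
    (hBsm : ∀ i j, ContDiffOn ℝ (⊤ : ℕ∞) (fun x => B x i j) U)
    (hBsymm : ∀ x ∈ U, (B x).IsSymm)
    (hBdet : ∀ x ∈ U, IsUnit (B x).det) :
    ∃ (U' : Set (Fin d → ℝ)) (A : (Fin d → ℝ) → Matrix (Fin m) (Fin m) ℝ),
      IsOpen U' ∧ (0 : Fin d → ℝ) ∈ U' ∧ U' ⊆ U ∧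
      (∀ i j, ContDiffOn ℝ (⊤ : ℕ∞) (fun x => A x i j) U') ∧
      (∀ x ∈ U', IsUnit (A x).det) ∧
      (∀ x ∈ U', B x = (A x)ᵀ * B 0 * A x) := by
  open scoped Matrix.Norms.Operator in
  obtain ⟨U', hU'U, hU', h0U', A, hA, hBA⟩ := exists_contDiffOn_transpose_mul_mul_eq
    (contDiffOn_iff_entries.2 hBsm) hU h0U hBsymm (hBdet 0 h0U)
  refine ⟨U', A, hU', h0U', hU'U, contDiffOn_iff_entries.1 hA, fun x hx => ?_, hBA⟩
  have hdet := hBdet x (hU'U hx)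
  rw [hBA x hx, det_mul, det_mul, det_transpose] at hdet
  exact (IsUnit.mul_iff.1 hdet).2
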